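/- Let H be a real Hilbert space and let L ∈ (0,∞). Let (x₁,q₁), (x₂,q₂) ∈ H × H. Then there exists a map Q : H → H that is monotone and L-Lipschitz with Q x₁ = q₁ and Q x₂ = q₂ if and only if ⟨x₁ − x₂, q₁ − q₂⟩ ≥ 0 and ‖q₁ − q₂‖² ≤ L²‖x₁ − x₂‖². -/

import Mathlib

open RealInnerProductSpace

/-!
Necessity is the two defining inequalities at `x₁, x₂`. For sufficiency, put `u = x₁ - x₂`,
`w = q₁ - q₂` and use the affine map `x ↦ q₂ + A (x - x₂)`, where
`A v = ‖u‖⁻² (⟪u, w⟫ v + ⟪u, v⟫ w - ⟪w, v⟫ u)`. Then `A u = w`; the part `v ↦ ⟪u, v⟫ w - ⟪w, v⟫ u`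
is skew, so `⟪A v, v⟫ = ⟪u, w⟫ ‖v‖² / ‖u‖² ≥ 0`; and nonnegativity of the Gram determinant of
`u, v, w` is exactly the bound `‖A v‖ ≤ (‖w‖ / ‖u‖) ‖v‖ ≤ L ‖v‖`.
-/

section

variable {H : Type*} [NormedAddCommGroup H] [InnerProductSpace ℝ H]

theorem gram_det_three_nonneg (u v w : H) :
    0 ≤ ‖u‖ ^ 2 * ‖v‖ ^ 2 * ‖w‖ ^ 2 + 2 * ⟪u, v⟫ * ⟪v, w⟫ * ⟪u, w⟫
      - ‖u‖ ^ 2 * ⟪v, w⟫ ^ 2 - ‖v‖ ^ 2 * ⟪u, w⟫ ^ 2 - ‖w‖ ^ 2 * ⟪u, v⟫ ^ 2 := by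
  have := (Matrix.posSemidef_gram ℝ ![u, v, w]).det_nonneg
  simp only [Matrix.det_fin_three, Matrix.gram_apply, Matrix.cons_val_zero, Matrix.cons_val_one,
    Matrix.cons_val, real_inner_self_eq_norm_sq] at this
  rw [real_inner_comm u v, real_inner_comm u w, real_inner_comm v w] at this
  linear_combination this

theorem norm_inner_smul_add_inner_smul_sub_inner_smul_le (u w v : H) :
    ‖⟪u, w⟫ • v + ⟪u, v⟫ • w - ⟪w, v⟫ • u‖ ≤ ‖u‖ * ‖w‖ * ‖v‖ := by
  refine le_of_sq_le_sq ?_ (by positivity)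
  rw [← real_inner_self_eq_norm_sq]
  simp only [inner_add_left, inner_add_right, inner_sub_left, inner_sub_right,
    real_inner_smul_left, real_inner_smul_right, real_inner_self_eq_norm_sq,
    norm_smul, mul_pow, Real.norm_eq_abs, sq_abs]
  rw [real_inner_comm u v, real_inner_comm v w, real_inner_comm u w]
  linear_combination gram_det_three_nonneg u v w

/-- For `u = 0` this is the zero map, since `(0 : ℝ)⁻¹ = 0`. -/
noncomputable def linearInterpolant (u w : H) : H →L[ℝ] H :=
  (‖u‖ ^ 2)⁻¹ • (⟪u, w⟫ • ContinuousLinearMap.id ℝ H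
    + (innerSL ℝ u).smulRight w - (innerSL ℝ w).smulRight u)

theorem linearInterpolant_apply (u w v : H) :
    linearInterpolant u w v = (‖u‖ ^ 2)⁻¹ • (⟪u, w⟫ • v + ⟪u, v⟫ • w - ⟪w, v⟫ • u) := by
  simp [linearInterpolant]

theorem linearInterpolant_apply_self {u w : H} (h : u = 0 → w = 0) :
    linearInterpolant u w u = w := by
  rcases eq_or_ne u 0 with rfl | hu
  · simp [h rfl]
  · have hu2 : ‖u‖ ^ 2 ≠ 0 := by positivity
    rw [linearInterpolant_apply, real_inner_self_eq_norm_sq, real_inner_comm, add_sub_cancel_left,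
      smul_smul, inv_mul_cancel₀ hu2, one_smul]

theorem inner_linearInterpolant_apply_self (u w v : H) :
    ⟪linearInterpolant u w v, v⟫ = ⟪u, w⟫ / ‖u‖ ^ 2 * ‖v‖ ^ 2 := by
  simp only [linearInterpolant_apply, real_inner_smul_left, inner_add_left, inner_sub_left,
    real_inner_self_eq_norm_sq]
  ring

theorem norm_linearInterpolant_apply_le (u w v : H) :
    ‖linearInterpolant u w v‖ ≤ ‖w‖ / ‖u‖ * ‖v‖ := by
  rcases eq_or_ne u 0 with rfl | hu
  · simp [linearInterpolant_apply]
  · have hu_pos : 0 < ‖u‖ := norm_pos_iff.mpr hu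
    calc ‖linearInterpolant u w v‖
        = (‖u‖ ^ 2)⁻¹ * ‖⟪u, w⟫ • v + ⟪u, v⟫ • w - ⟪w, v⟫ • u‖ := by
          rw [linearInterpolant_apply, norm_smul, norm_inv, norm_pow, norm_norm]
      _ ≤ (‖u‖ ^ 2)⁻¹ * (‖u‖ * ‖w‖ * ‖v‖) := by
          gcongr; exact norm_inner_smul_add_inner_smul_sub_inner_smul_le u w v
      _ = ‖w‖ / ‖u‖ * ‖v‖ := by field_simp

end

theorem two_point_interpolation_ML2_general
    {H : Type*} [NormedAddCommGroup H] [InnerProductSpace ℝ H]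
    {L : ℝ} (hL : 0 < L)
    (x₁ q₁ x₂ q₂ : H) :
    (∃ Q : H → H,
        (∀ a b : H, ⟪Q a - Q b, a - b⟫ ≥ 0) ∧
        (∀ a b : H, ‖Q a - Q b‖ ≤ L * ‖a - b‖) ∧
        Q x₁ = q₁ ∧ Q x₂ = q₂) ↔
      (⟪x₁ - x₂, q₁ - q₂⟫ ≥ 0 ∧
       ‖q₁ - q₂‖ ^ 2 ≤ L ^ 2 * ‖x₁ - x₂‖ ^ 2) := by
  rw [← mul_pow]
  constructor
  · rintro ⟨Q, hmono, hlip, rfl, rfl⟩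
    exact ⟨real_inner_comm (x₁ - x₂) _ ▸ hmono x₁ x₂,
      pow_le_pow_left₀ (norm_nonneg _) (hlip x₁ x₂) 2⟩
  · rintro ⟨hmono, hlip_sq⟩
    have hlip : ‖q₁ - q₂‖ ≤ L * ‖x₁ - x₂‖ := le_of_sq_le_sq hlip_sq (by positivity)
    set A := linearInterpolant (x₁ - x₂) (q₁ - q₂)
    have hdiff (a b : H) : q₂ + A (a - x₂) - (q₂ + A (b - x₂)) = A (a - b) := by
      rw [add_sub_add_left_eq_sub, ← map_sub, sub_sub_sub_cancel_right]
    refine ⟨fun x ↦ q₂ + A (x - x₂), fun a b ↦ ?_, fun a b ↦ ?_, ?_, by simp⟩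
    · rw [hdiff, inner_linearInterpolant_apply_self]
      positivity
    · rw [hdiff]
      refine (norm_linearInterpolant_apply_le _ _ _).trans ?_
      gcongr
      exact div_le_of_le_mul₀ (norm_nonneg _) hL.le hlip
    · have hA : A (x₁ - x₂) = q₁ - q₂ := linearInterpolant_apply_self fun hx ↦ by
        simpa [hx] using hlip
      simp [hA]

/-- Two-point interpolation with `M ∩ L_L`: `{(x₁,q₁),(x₂,q₂)}` is interpolable by a
monotone and `L`-Lipschitz map iff the two corresponding inequalities hold. -/
theorem two_point_interpolation_ML2
    {H : Type*} [NormedAddCommGroup H] [InnerProductSpace ℝ H] [CompleteSpace H]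
    {L : ℝ} (hL : 0 < L)
    (x₁ q₁ x₂ q₂ : H) :
    (∃ Q : H → H,
        (∀ a b : H, ⟪Q a - Q b, a - b⟫ ≥ 0) ∧
        (∀ a b : H, ‖Q a - Q b‖ ≤ L * ‖a - b‖) ∧
        Q x₁ = q₁ ∧ Q x₂ = q₂) ↔
      (⟪x₁ - x₂, q₁ - q₂⟫ ≥ 0 ∧
       ‖q₁ - q₂‖ ^ 2 ≤ L ^ 2 * ‖x₁ - x₂‖ ^ 2) :=
  two_point_interpolation_ML2_general hL x₁ q₁ x₂ q₂
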